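/- arXiv:1611.05796 — 2 statements merged into one kernel-verified Lean document; each statement's English description precedes it below -/
import Mathlib

section
/- For any rate matrix Q indexed by a nonempty finite set 𝒳 and any real Δ ≥ 0, one has ‖e^{QΔ} − I‖ ≤ Δ‖Q‖. -/
open scoped BigOperators

/-- The operator norm of a matrix induced by the supremum norm on `X → ℝ`:
`‖A‖ = max_{x} Σ_{y} |A x y|`. -/
noncomputable def matNorm {X : Type*} [Fintype X] (A : Matrix X X ℝ) : ℝ :=
  ⨆ x, ∑ y, |A x y|

/-- A (transition) rate matrix: nonnegative off-diagonal entries, rows summing to zero. -/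
def IsRateMatrix {X : Type*} [Fintype X] (Q : Matrix X X ℝ) : Prop :=
  (∀ x y, x ≠ y → 0 ≤ Q x y) ∧ ∀ x, ∑ y, Q x y = 0

/-- The matrix exponential `e^A = Σ_{k≥0} A^k / k!`. -/
noncomputable def mexp {X : Type*} [Fintype X] [DecidableEq X] (A : Matrix X X ℝ) :
    Matrix X X ℝ :=
  ∑' k : ℕ, ((k.factorial : ℝ)⁻¹) • A ^ k

/-!
Put `c = ‖Q‖ / 2`. Every row of a rate matrix has absolute sum `-2 Q x x`, so `M = Q + c • 1` is
entrywise nonnegative with all row sums `c`. Hence `e^Q = e^{-c} e^M` is row stochastic with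
diagonal entries at least `e^{-c} ≥ 1 - c`, and for a row-stochastic `P` the `x`-th absolute row
sum of `P - 1` is `2 (1 - P x x) ≤ 2 c = ‖Q‖`. Since `Δ • Q` is again a rate matrix and
`‖Δ • Q‖ = Δ ‖Q‖`, the case `Δ = 1` suffices.
-/

open Matrix

section MatNorm

variable {X : Type*} [Fintype X]

lemma sum_abs_le_matNorm (A : Matrix X X ℝ) (x : X) : ∑ y, |A x y| ≤ matNorm A :=
  le_ciSup (f := fun x => ∑ y, |A x y|) (Set.finite_range _).bddAbove x

lemma matNorm_nonneg (A : Matrix X X ℝ) : 0 ≤ matNorm A :=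
  Real.iSup_nonneg fun _ => Finset.sum_nonneg fun _ _ => abs_nonneg _

lemma matNorm_le {A : Matrix X X ℝ} {r : ℝ} (h : ∀ x, ∑ y, |A x y| ≤ r) (hr : 0 ≤ r) :
    matNorm A ≤ r :=
  Real.iSup_le h hr

lemma matNorm_smul {c : ℝ} (hc : 0 ≤ c) (A : Matrix X X ℝ) :
    matNorm (c • A) = c * matNorm A := by
  simp only [matNorm, Real.mul_iSup_of_nonneg hc, Finset.mul_sum, Matrix.smul_apply, smul_eq_mul,
    abs_mul, abs_of_nonneg hc]

end MatNorm

section Exp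

variable {X : Type*} [Fintype X] [DecidableEq X]

lemma mexp_eq_exp (A : Matrix X X ℝ) : mexp A = NormedSpace.exp A := by
  rw [NormedSpace.exp_eq_tsum ℝ]
  rfl

lemma hasSum_mexp (A : Matrix X X ℝ) :
    HasSum (fun k : ℕ => (k.factorial : ℝ)⁻¹ • A ^ k) (mexp A) := by
  let _ : NormedRing (Matrix X X ℝ) := Matrix.linftyOpNormedRing
  let _ : NormedAlgebra ℝ (Matrix X X ℝ) := Matrix.linftyOpNormedAlgebra
  exact (NormedSpace.expSeries_summable' (𝕂 := ℝ) A).hasSum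

lemma hasSum_mexp_apply (A : Matrix X X ℝ) (x y : X) :
    HasSum (fun k : ℕ => (k.factorial : ℝ)⁻¹ * (A ^ k) x y) (mexp A x y) :=
  (hasSum_mexp A).map (entryLinearMap ℝ ℝ x y) (continuous_apply_apply x y)

lemma mexp_apply_nonneg {M : Matrix X X ℝ} (hM : ∀ x y, 0 ≤ M x y) (x y : X) :
    0 ≤ mexp M x y :=
  (hasSum_mexp_apply M x y).nonneg fun k => mul_nonneg (by positivity) (pow_apply_nonneg hM k x y)

lemma one_le_mexp_apply_self {M : Matrix X X ℝ} (hM : ∀ x y, 0 ≤ M x y) (x : X) :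
    1 ≤ mexp M x x := by
  simpa using le_hasSum (hasSum_mexp_apply M x x) 0 fun k _ =>
    mul_nonneg (by positivity) (pow_apply_nonneg hM k x x)

lemma pow_mulVec_of_mulVec_eq_smul {M : Matrix X X ℝ} {v : X → ℝ} {r : ℝ} (h : M *ᵥ v = r • v)
    (k : ℕ) : M ^ k *ᵥ v = r ^ k • v := by
  induction k with
  | zero => simp
  | succ n ih => rw [pow_succ', ← mulVec_mulVec, ih, mulVec_smul, h, smul_smul, pow_succ]

lemma mexp_mulVec_of_mulVec_eq_smul {M : Matrix X X ℝ} {v : X → ℝ} {r : ℝ}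
    (h : M *ᵥ v = r • v) : mexp M *ᵥ v = Real.exp r • v := by
  have hexp : HasSum (fun k : ℕ => (k.factorial : ℝ)⁻¹ * r ^ k) (Real.exp r) := by
    rw [Real.exp_eq_exp_ℝ]
    exact NormedSpace.exp_series_hasSum_exp' (𝕂 := ℝ) r
  refine ((hasSum_mexp M).map (mulVec.addMonoidHomLeft v)
    (continuous_id.matrix_mulVec continuous_const)).unique ?_
  convert hexp.smul_const v using 2 with k
  simp [mulVec.addMonoidHomLeft, smul_mulVec, pow_mulVec_of_mulVec_eq_smul h, smul_smul]

lemma mexp_add_smul_one (A : Matrix X X ℝ) (r : ℝ) :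
    mexp (A + r • 1) = Real.exp r • mexp A := by
  let _ : NormedRing (Matrix X X ℝ) := Matrix.linftyOpNormedRing
  let _ : NormedAlgebra ℝ (Matrix X X ℝ) := Matrix.linftyOpNormedAlgebra
  have hcomm : Commute A (r • 1) := (Commute.one_right A).smul_right r
  have hscalar : NormedSpace.exp (r • (1 : Matrix X X ℝ)) = Real.exp r • 1 := by
    rw [← Algebra.algebraMap_eq_smul_one, ← Algebra.algebraMap_eq_smul_one, Real.exp_eq_exp_ℝ,
      NormedSpace.algebraMap_exp_comm]
    -- both sides agree up to the topology instance chosen on matrices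
    rfl
  rw [mexp_eq_exp, mexp_eq_exp, Matrix.exp_add_of_commute A _ hcomm, hscalar, mul_smul_one]

end Exp

section Stochastic

variable {X : Type*} [Fintype X] [DecidableEq X]

lemma sum_abs_sub_one_apply_of_mem_rowStochastic {P : Matrix X X ℝ} (hP : P ∈ rowStochastic ℝ X)
    (x : X) : ∑ y, |(P - 1) x y| = 2 * (1 - P x x) := by
  have hoff : ∑ y ∈ Finset.univ.erase x, P x y = 1 - P x x := by
    rw [← sum_row_of_mem_rowStochastic hP x, ← Finset.add_sum_erase _ _ (Finset.mem_univ x)]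
    ring
  rw [← Finset.add_sum_erase _ _ (Finset.mem_univ x), Matrix.sub_apply, one_apply_eq,
    abs_of_nonpos (sub_nonpos.2 (le_one_of_mem_rowStochastic hP)), ← hoff,
    Finset.sum_congr rfl fun y hy => by
      rw [Matrix.sub_apply, one_apply_ne (Finset.ne_of_mem_erase hy).symm, sub_zero,
        abs_of_nonneg (nonneg_of_mem_rowStochastic hP)]]
  linarith

lemma mexp_add_smul_one_mem_rowStochastic {M : Matrix X X ℝ} {r : ℝ} (hM : ∀ x y, 0 ≤ M x y)
    (hM1 : M *ᵥ 1 = r • 1) : mexp (M + (-r) • 1) ∈ rowStochastic ℝ X := by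
  rw [mexp_add_smul_one, mem_rowStochastic]
  refine ⟨fun x y => mul_nonneg (Real.exp_nonneg _) (mexp_apply_nonneg hM x y), ?_⟩
  rw [smul_mulVec, mexp_mulVec_of_mulVec_eq_smul hM1, smul_smul, ← Real.exp_add, neg_add_cancel,
    Real.exp_zero, one_smul]

lemma exp_neg_le_mexp_add_smul_one_apply_self {M : Matrix X X ℝ} {r : ℝ}
    (hM : ∀ x y, 0 ≤ M x y) (x : X) : Real.exp (-r) ≤ mexp (M + (-r) • 1) x x := by
  rw [mexp_add_smul_one, Matrix.smul_apply, smul_eq_mul]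
  exact le_mul_of_one_le_right (Real.exp_nonneg _) (one_le_mexp_apply_self hM x)

end Stochastic

namespace IsRateMatrix

variable {X : Type*} [Fintype X] {Q : Matrix X X ℝ}

lemma smul (hQ : IsRateMatrix Q) {c : ℝ} (hc : 0 ≤ c) : IsRateMatrix (c • Q) :=
  ⟨fun x y hxy => mul_nonneg hc (hQ.1 x y hxy), fun x => by simp [← Finset.mul_sum, hQ.2 x]⟩

lemma mulVec_one (hQ : IsRateMatrix Q) : Q *ᵥ 1 = 0 := by
  ext x
  simp [mulVec, dotProduct, hQ.2 x]

lemma sum_abs_row (hQ : IsRateMatrix Q) (x : X) : ∑ y, |Q x y| = -(2 * Q x x) := by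
  classical
  have hoff : ∑ y ∈ Finset.univ.erase x, Q x y = -Q x x := by
    rw [eq_neg_iff_add_eq_zero, add_comm, Finset.add_sum_erase _ _ (Finset.mem_univ x), hQ.2 x]
  have hdiag : Q x x ≤ 0 := by
    have := Finset.sum_nonneg fun y (hy : y ∈ Finset.univ.erase x) =>
      hQ.1 x y (Finset.ne_of_mem_erase hy).symm
    linarith
  rw [← Finset.add_sum_erase _ _ (Finset.mem_univ x), abs_of_nonpos hdiag, ← neg_neg (Q x x),
    ← hoff, Finset.sum_congr rfl fun y hy =>
      abs_of_nonneg (hQ.1 x y (Finset.ne_of_mem_erase hy).symm)]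
  ring

lemma matNorm_mexp_sub_one_le [DecidableEq X] (hQ : IsRateMatrix Q) :
    matNorm (mexp Q - 1) ≤ matNorm Q := by
  set c := matNorm Q / 2 with hc
  set M := Q + c • 1
  have hM : ∀ x y, 0 ≤ M x y := by
    intro x y
    rcases eq_or_ne x y with rfl | hxy
    · have := hQ.sum_abs_row x ▸ sum_abs_le_matNorm Q x
      simp only [M, Matrix.add_apply, Matrix.smul_apply, one_apply_eq, smul_eq_mul, mul_one]
      linarith
    · simpa [M, one_apply_ne hxy] using hQ.1 x y hxy
  have hM1 : M *ᵥ 1 = c • 1 := by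
    rw [add_mulVec, hQ.mulVec_one, smul_mulVec, one_mulVec, zero_add]
  have hQM : Q = M + (-c) • 1 := by simp [M]
  have hP := mexp_add_smul_one_mem_rowStochastic hM hM1
  rw [← hQM] at hP
  refine matNorm_le (fun x => ?_) (matNorm_nonneg Q)
  have hdiag : 1 - c ≤ mexp Q x x := by
    calc 1 - c ≤ Real.exp (-c) := by linarith [Real.add_one_le_exp (-c)]
      _ ≤ mexp Q x x := hQM ▸ exp_neg_le_mexp_add_smul_one_apply_self hM x
  rw [sum_abs_sub_one_apply_of_mem_rowStochastic hP]
  linarith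

end IsRateMatrix

theorem stmt5_general {X : Type*} [Fintype X] [DecidableEq X]
    (Q : Matrix X X ℝ) (hQ : IsRateMatrix Q) (Δ : ℝ) (hΔ : 0 ≤ Δ) :
    matNorm (mexp (Δ • Q) - 1) ≤ Δ * matNorm Q :=
  matNorm_smul hΔ Q ▸ (hQ.smul hΔ).matNorm_mexp_sub_one_le

theorem stmt5 {X : Type*} [Fintype X] [Nonempty X] [DecidableEq X]
    (Q : Matrix X X ℝ) (hQ : IsRateMatrix Q) (Δ : ℝ) (hΔ : 0 ≤ Δ) :
    matNorm (mexp (Δ • Q) - 1) ≤ Δ * matNorm Q :=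
  stmt5_general Q hQ Δ hΔ
end

section
/- Let Q̲ be a lower transition rate operator on ℝ^𝒳 and, for each i ∈ {1,…,n}, let Δ_i ≥ 0 be such that Δ_i‖Q̲‖ ≤ 1, where ‖Q̲‖ := sup{‖Q̲f‖ : ‖f‖ = 1}. Let Δ := Σ_{i=1}^n Δ_i. Then ‖(I+Δ_1Q̲)∘(I+Δ_2Q̲)∘⋯∘(I+Δ_nQ̲) − (I+ΔQ̲)‖ ≤ Δ²‖Q̲‖², where for maps A, B : ℝ^𝒳 → ℝ^𝒳 we write ‖A − B‖ := sup{‖Af − Bf‖ : f ∈ ℝ^𝒳, ‖f‖ = 1}. -/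
open scoped BigOperators

/-- A lower transition rate operator on `ℝ^𝒳`: maps constants to zero (LR1), is
nonnegative on off-diagonal indicators (LR2), super-additive (LR3), and
non-negatively homogeneous (LR4). -/
def IsLowerTransitionRateOperator {X : Type*} [Fintype X] [DecidableEq X]
    (Q : (X → ℝ) → (X → ℝ)) : Prop :=
  (∀ c : ℝ, Q (fun _ => c) = 0) ∧
  (∀ x y : X, y ≠ x → 0 ≤ Q (Pi.single y 1) x) ∧
  (∀ f g : X → ℝ, ∀ x : X, Q f x + Q g x ≤ Q (f + g) x) ∧
  (∀ c : ℝ, 0 ≤ c → ∀ f : X → ℝ, Q (c • f) = c • Q f)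

/-- The distance `‖A − B‖ = sup{‖Af − Bf‖ : ‖f‖ = 1}` between two maps of `ℝ^𝒳`,
where `‖·‖` is the supremum norm. -/
noncomputable def opDist {X : Type*} [Fintype X]
    (A B : (X → ℝ) → (X → ℝ)) : ℝ :=
  ⨆ f : {f : X → ℝ // ‖f‖ = 1}, ‖A f.1 - B f.1‖

/-- The operator norm `‖A‖ = sup{‖Af‖ : ‖f‖ = 1}` of a map of `ℝ^𝒳`. -/
noncomputable def opNorm {X : Type*} [Fintype X] (A : (X → ℝ) → (X → ℝ)) : ℝ :=
  ⨆ f : {f : X → ℝ // ‖f‖ = 1}, ‖A f.1‖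

/-- The composition `T 0 ∘ T 1 ∘ ⋯ ∘ T (n-1)` of a finite family of operators,
in the given order. -/
def compFamily {X : Type*} {n : ℕ} (T : Fin n → ((X → ℝ) → (X → ℝ))) :
    (X → ℝ) → (X → ℝ) :=
  (List.ofFn T).foldr (· ∘ ·) id

/-!
Superadditivity and homogeneity make `Q̲` Lipschitz with constant `‖Q̲‖`. For `f ≥ c` one has
`Q̲f(x) ≥ (f x - c) Q̲𝟙_x(x) ≥ -(f x - c)‖Q̲‖`, so when `δ‖Q̲‖ ≤ 1` the map `I + δQ̲` keeps `f`
between its minimum and maximum and is nonexpansive. Writing the product as `(I + Δ_1Q̲) ∘ P`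
with `g = Pf` and `D = Δ - Δ_1`, induction gives `‖g - f‖ ≤ D‖Q̲‖‖f‖`, and then
`‖(I + Δ_1Q̲)g - f - ΔQ̲f‖ ≤ ‖g - f - DQ̲f‖ + Δ_1‖Q̲g - Q̲f‖ ≤ (D² + Δ_1 D)‖Q̲‖²‖f‖`.
-/

theorem opNorm_nonneg {X : Type*} [Fintype X] (A : (X → ℝ) → (X → ℝ)) : 0 ≤ opNorm A :=
  Real.iSup_nonneg fun _ => norm_nonneg _

namespace IsLowerTransitionRateOperator

variable {X : Type*} [Fintype X] [DecidableEq X] {Q : (X → ℝ) → (X → ℝ)}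

theorem map_zero (hQ : IsLowerTransitionRateOperator Q) : Q 0 = 0 := by
  simpa using hQ.2.2.2 0 le_rfl 0

theorem apply_le_neg_apply_neg (hQ : IsLowerTransitionRateOperator Q) (f : X → ℝ) (x : X) :
    Q f x ≤ -Q (-f) x := by
  have h := hQ.2.2.1 f (-f) x
  rw [add_neg_cancel, hQ.map_zero] at h
  simp only [Pi.zero_apply] at h
  linarith

theorem apply_add_const (hQ : IsLowerTransitionRateOperator Q) (f : X → ℝ) (c : ℝ) (x : X) :
    Q (f + fun _ => c) x = Q f x := by
  have h₁ := hQ.2.2.1 f (fun _ => c) x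
  have h₂ := hQ.2.2.1 (f + fun _ => c) (fun _ => -c) x
  rw [hQ.1] at h₁
  have hcancel : (f + fun _ => c) + (fun _ => -c) = f := by ext; simp
  rw [hQ.1, hcancel] at h₂
  simp only [Pi.zero_apply, add_zero] at h₁ h₂
  linarith

theorem sum_apply_le (hQ : IsLowerTransitionRateOperator Q) {ι : Type*} (s : Finset ι)
    (f : ι → X → ℝ) (x : X) : ∑ i ∈ s, Q (f i) x ≤ Q (∑ i ∈ s, f i) x := by
  have h := Finset.le_sum_of_subadditive (fun g => -Q g x) (by simp [hQ.map_zero])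
    (fun g h => by linarith [hQ.2.2.1 g h x]) s f
  simp only [Finset.sum_neg_distrib] at h
  linarith

theorem mul_apply_single_le_of_nonneg (hQ : IsLowerTransitionRateOperator Q) {f : X → ℝ}
    (hf : ∀ y, 0 ≤ f y) (x : X) : f x * Q (Pi.single x 1) x ≤ Q f x := by
  have hterm (y : X) : Q (Pi.single y (f y)) x = f y * Q (Pi.single y 1) x := by
    rw [← smul_eq_mul, ← Pi.smul_apply, ← hQ.2.2.2 _ (hf y), ← Pi.single_smul', smul_eq_mul,
      mul_one]
  have hsum := hQ.sum_apply_le Finset.univ (fun y => Pi.single y (f y)) x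
  rw [Finset.univ_sum_single] at hsum
  simp only [hterm] at hsum
  rw [← Finset.add_sum_erase _ _ (Finset.mem_univ x)] at hsum
  have hoff : 0 ≤ ∑ y ∈ Finset.univ.erase x, f y * Q (Pi.single y 1) x :=
    Finset.sum_nonneg fun y hy => mul_nonneg (hf y) (hQ.2.1 x y (Finset.ne_of_mem_erase hy))
  linarith

theorem mul_apply_single_le (hQ : IsLowerTransitionRateOperator Q) {f : X → ℝ} {c : ℝ}
    (hf : ∀ y, c ≤ f y) (x : X) : (f x - c) * Q (Pi.single x 1) x ≤ Q f x := by
  have h := hQ.mul_apply_single_le_of_nonneg (f := f + fun _ => -c)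
    (fun y => by simp only [Pi.add_apply]; linarith [hf y]) x
  rwa [hQ.apply_add_const, Pi.add_apply, ← sub_eq_add_neg] at h

theorem neg_le_apply (hQ : IsLowerTransitionRateOperator Q) (f : X → ℝ) (x : X) :
    -(2 * ‖f‖ * |Q (Pi.single x 1) x|) ≤ Q f x := by
  have hf (y : X) : |f y| ≤ ‖f‖ := norm_le_pi_norm f y
  have h := hQ.mul_apply_single_le (fun y => (abs_le.mp (hf y)).1) x
  have hx := abs_le.mp (hf x)
  nlinarith [neg_abs_le (Q (Pi.single x 1) x), abs_nonneg (Q (Pi.single x 1) x)]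

theorem abs_apply_le (hQ : IsLowerTransitionRateOperator Q) (f : X → ℝ) (x : X) :
    |Q f x| ≤ 2 * ‖f‖ * |Q (Pi.single x 1) x| := by
  have h := hQ.neg_le_apply (-f) x
  rw [norm_neg] at h
  exact abs_le.mpr ⟨hQ.neg_le_apply f x, by linarith [hQ.apply_le_neg_apply_neg f x]⟩

theorem bddAbove_range_norm (hQ : IsLowerTransitionRateOperator Q) :
    BddAbove (Set.range fun f : {f : X → ℝ // ‖f‖ = 1} => ‖Q f.1‖) := by
  refine ⟨2 * ∑ x, |Q (Pi.single x 1) x|, ?_⟩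
  rintro _ ⟨⟨f, hf⟩, rfl⟩
  refine (pi_norm_le_iff_of_nonneg (by positivity)).mpr fun x => ?_
  calc ‖Q f x‖ ≤ 2 * ‖f‖ * |Q (Pi.single x 1) x| := hQ.abs_apply_le f x
    _ ≤ 2 * ∑ x, |Q (Pi.single x 1) x| := by
      rw [hf, mul_one]
      gcongr
      exact Finset.single_le_sum (f := fun y => |Q (Pi.single y 1) y|)
        (fun _ _ => abs_nonneg _) (Finset.mem_univ x)

theorem norm_apply_le (hQ : IsLowerTransitionRateOperator Q) (f : X → ℝ) :
    ‖Q f‖ ≤ opNorm Q * ‖f‖ := by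
  rcases eq_or_ne f 0 with rfl | hf
  · simp [hQ.map_zero]
  have hf' : 0 < ‖f‖ := norm_pos_iff.mpr hf
  set u : X → ℝ := ‖f‖⁻¹ • f
  have hu : ‖u‖ = 1 := by
    rw [norm_smul, norm_inv, norm_norm, inv_mul_cancel₀ hf'.ne']
  have hfu : Q f = ‖f‖ • Q u := by
    rw [← hQ.2.2.2 _ hf'.le, smul_inv_smul₀ hf'.ne']
  rw [hfu, norm_smul, norm_norm, mul_comm]
  gcongr
  exact le_ciSup hQ.bddAbove_range_norm ⟨u, hu⟩

theorem apply_sub_apply_le (hQ : IsLowerTransitionRateOperator Q) (f g : X → ℝ) (x : X) :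
    Q g x - Q f x ≤ opNorm Q * ‖f - g‖ := by
  have hsup := hQ.2.2.1 (f - g) g x
  rw [sub_add_cancel] at hsup
  have hbound : -Q (f - g) x ≤ opNorm Q * ‖f - g‖ :=
    (neg_le_abs _).trans ((norm_le_pi_norm (Q (f - g)) x).trans (hQ.norm_apply_le _))
  linarith

theorem norm_apply_sub_apply_le (hQ : IsLowerTransitionRateOperator Q) (f g : X → ℝ) :
    ‖Q f - Q g‖ ≤ opNorm Q * ‖f - g‖ := by
  refine (pi_norm_le_iff_of_nonneg (mul_nonneg (opNorm_nonneg Q) (norm_nonneg _))).mpr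
    fun x => ?_
  have h := hQ.apply_sub_apply_le g f x
  rw [norm_sub_rev] at h
  exact abs_sub_le_iff.mpr ⟨h, hQ.apply_sub_apply_le f g x⟩

theorem neg_opNorm_le_apply_single (hQ : IsLowerTransitionRateOperator Q) (x : X) :
    -opNorm Q ≤ Q (Pi.single x 1) x := by
  have h := (norm_le_pi_norm _ x).trans (hQ.norm_apply_le (Pi.single x 1))
  rw [Pi.norm_single, norm_one, mul_one] at h
  exact neg_le_of_abs_le h

theorem le_apply_add_smul_apply (hQ : IsLowerTransitionRateOperator Q) {δ : ℝ} (hδ : 0 ≤ δ)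
    (hδQ : δ * opNorm Q ≤ 1) {f : X → ℝ} {c : ℝ} (hf : ∀ y, c ≤ f y) (x : X) :
    c ≤ f x + δ * Q f x := by
  have h := hQ.mul_apply_single_le hf x
  have hq := hQ.neg_opNorm_le_apply_single x
  have hfx : 0 ≤ f x - c := sub_nonneg.mpr (hf x)
  nlinarith [mul_le_mul_of_nonneg_left hq (mul_nonneg hδ hfx)]

theorem norm_add_smul_apply_le (hQ : IsLowerTransitionRateOperator Q) {δ : ℝ} (hδ : 0 ≤ δ)
    (hδQ : δ * opNorm Q ≤ 1) (f : X → ℝ) : ‖f + δ • Q f‖ ≤ ‖f‖ := by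
  have hf (y : X) : |f y| ≤ ‖f‖ := norm_le_pi_norm f y
  refine (pi_norm_le_iff_of_nonneg (norm_nonneg f)).mpr fun x => abs_le.mpr ⟨?_, ?_⟩
  · exact hQ.le_apply_add_smul_apply hδ hδQ (fun y => (abs_le.mp (hf y)).1) x
  · have h := hQ.le_apply_add_smul_apply hδ hδQ (f := -f)
      (fun y => neg_le_neg (abs_le.mp (hf y)).2) x
    have h' := mul_le_mul_of_nonneg_left (hQ.apply_le_neg_apply_neg f x) hδ
    simp only [Pi.neg_apply] at h
    simp only [Pi.add_apply, Pi.smul_apply, smul_eq_mul]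
    linarith

end IsLowerTransitionRateOperator

section compFamily

variable {X : Type*}

theorem compFamily_succ {n : ℕ} (T : Fin (n + 1) → ((X → ℝ) → (X → ℝ))) :
    compFamily T = T 0 ∘ compFamily (fun i => T i.succ) := by
  simp [compFamily, List.ofFn_succ]

variable [Fintype X]

theorem norm_compFamily_le {n : ℕ} {T : Fin n → ((X → ℝ) → (X → ℝ))}
    (hT : ∀ i f, ‖T i f‖ ≤ ‖f‖) (f : X → ℝ) : ‖compFamily T f‖ ≤ ‖f‖ := by
  induction n with
  | zero => simp [compFamily]
  | succ n ih =>
    rw [compFamily_succ, Function.comp_apply]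
    exact (hT 0 _).trans (ih (fun i => hT i.succ))

variable {Q : (X → ℝ) → (X → ℝ)} {L : ℝ}

theorem norm_compFamily_sub_le (hL : 0 ≤ L) (hQ : ∀ f, ‖Q f‖ ≤ L * ‖f‖) {n : ℕ}
    {Δ : Fin n → ℝ} (hΔ : ∀ i, 0 ≤ Δ i) (hstep : ∀ i f, ‖f + Δ i • Q f‖ ≤ ‖f‖) (f : X → ℝ) :
    ‖compFamily (fun i g => g + Δ i • Q g) f - f‖ ≤ (∑ i, Δ i) * L * ‖f‖ := by
  induction n with
  | zero => simp [compFamily]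
  | succ n ih =>
    rw [compFamily_succ, Function.comp_apply, Fin.sum_univ_succ]
    set g := compFamily (fun i g => g + Δ i.succ • Q g) f
    have hg : ‖g‖ ≤ ‖f‖ := norm_compFamily_le (fun i => hstep i.succ) f
    have hgf : ‖g - f‖ ≤ (∑ i : Fin n, Δ i.succ) * L * ‖f‖ :=
      ih (fun i => hΔ i.succ) (fun i => hstep i.succ)
    calc ‖g + Δ 0 • Q g - f‖ = ‖(g - f) + Δ 0 • Q g‖ := by congr 1; abel
      _ ≤ ‖g - f‖ + Δ 0 * ‖Q g‖ := by
        refine (norm_add_le _ _).trans_eq ?_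
        rw [norm_smul, Real.norm_of_nonneg (hΔ 0)]
      _ ≤ (∑ i : Fin n, Δ i.succ) * L * ‖f‖ + Δ 0 * (L * ‖f‖) := by
        gcongr
        · exact hΔ 0
        · exact (hQ g).trans (mul_le_mul_of_nonneg_left hg hL)
      _ = (Δ 0 + ∑ i : Fin n, Δ i.succ) * L * ‖f‖ := by ring

theorem norm_compFamily_sub_sub_smul_le (hL : 0 ≤ L) (hQ₀ : Q 0 = 0)
    (hQ : ∀ f g, ‖Q f - Q g‖ ≤ L * ‖f - g‖) {n : ℕ} {Δ : Fin n → ℝ} (hΔ : ∀ i, 0 ≤ Δ i)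
    (hstep : ∀ i f, ‖f + Δ i • Q f‖ ≤ ‖f‖) (f : X → ℝ) :
    ‖compFamily (fun i g => g + Δ i • Q g) f - f - (∑ i, Δ i) • Q f‖ ≤
      (∑ i, Δ i) ^ 2 * L ^ 2 * ‖f‖ := by
  induction n with
  | zero => simp [compFamily]
  | succ n ih =>
    rw [compFamily_succ, Function.comp_apply, Fin.sum_univ_succ]
    set g := compFamily (fun i g => g + Δ i.succ • Q g) f
    set D := ∑ i : Fin n, Δ i.succ
    have hD : 0 ≤ D := Finset.sum_nonneg fun i _ => hΔ i.succ
    have hgf : ‖g - f‖ ≤ D * L * ‖f‖ :=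
      norm_compFamily_sub_le hL (fun f => by simpa [hQ₀] using hQ f 0)
        (fun i => hΔ i.succ) (fun i => hstep i.succ) f
    have ih' : ‖g - f - D • Q f‖ ≤ D ^ 2 * L ^ 2 * ‖f‖ :=
      ih (fun i => hΔ i.succ) (fun i => hstep i.succ)
    calc ‖g + Δ 0 • Q g - f - (Δ 0 + D) • Q f‖ = ‖(g - f - D • Q f) + Δ 0 • (Q g - Q f)‖ := by
          congr 1; rw [smul_sub, add_smul]; abel
      _ ≤ ‖g - f - D • Q f‖ + Δ 0 * ‖Q g - Q f‖ := by
        refine (norm_add_le _ _).trans_eq ?_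
        rw [norm_smul, Real.norm_of_nonneg (hΔ 0)]
      _ ≤ D ^ 2 * L ^ 2 * ‖f‖ + Δ 0 * (L * (D * L * ‖f‖)) := by
        gcongr
        · exact hΔ 0
        · exact (hQ g f).trans (mul_le_mul_of_nonneg_left hgf hL)
      _ ≤ (Δ 0 + D) ^ 2 * L ^ 2 * ‖f‖ := by
        have hΔ₀ := hΔ 0
        have h₁ : 0 ≤ Δ 0 * D * L ^ 2 * ‖f‖ := by positivity
        have h₂ : 0 ≤ Δ 0 ^ 2 * L ^ 2 * ‖f‖ := by positivity
        nlinarith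

end compFamily

theorem stmt16_general {X : Type*} [Fintype X] [DecidableEq X]
    (Ql : (X → ℝ) → (X → ℝ)) (hQl : IsLowerTransitionRateOperator Ql)
    {n : ℕ} (Δ : Fin n → ℝ) (hΔ0 : ∀ i, 0 ≤ Δ i)
    (hΔQl : ∀ i, Δ i * opNorm Ql ≤ 1) :
    opDist (compFamily (fun i => fun g => g + Δ i • Ql g))
        (fun g => g + (∑ i, Δ i) • Ql g) ≤
      (∑ i, Δ i) ^ 2 * opNorm Ql ^ 2 := by
  refine Real.iSup_le (fun ⟨f, hf⟩ => ?_) (by positivity)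
  have h := norm_compFamily_sub_sub_smul_le (opNorm_nonneg Ql) hQl.map_zero
    hQl.norm_apply_sub_apply_le hΔ0 (fun i => hQl.norm_add_smul_apply_le (hΔ0 i) (hΔQl i)) f
  rwa [hf, mul_one, sub_sub] at h

/-- `‖(I+Δ_1Q̲)∘⋯∘(I+Δ_nQ̲) − (I+ΔQ̲)‖ ≤ Δ²‖Q̲‖²` with `Δ = Σ_i Δ_i`, whenever each
`Δ_i ≥ 0` satisfies `Δ_i‖Q̲‖ ≤ 1`. -/
theorem stmt16 {X : Type*} [Fintype X] [Nonempty X] [DecidableEq X]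
    (Ql : (X → ℝ) → (X → ℝ)) (hQl : IsLowerTransitionRateOperator Ql)
    {n : ℕ} (Δ : Fin n → ℝ) (hΔ0 : ∀ i, 0 ≤ Δ i)
    (hΔQl : ∀ i, Δ i * opNorm Ql ≤ 1) :
    opDist (compFamily (fun i => fun g => g + Δ i • Ql g))
        (fun g => g + (∑ i, Δ i) • Ql g) ≤
      (∑ i, Δ i) ^ 2 * opNorm Ql ^ 2 :=
  stmt16_general Ql hQl Δ hΔ0 hΔQl
end
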